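/- Let φ : ℝ³ → ℝ³ be defined by φ(x₁,x₂,x₃) = (x₁, x₂, x₃−|x₁|−|x₂|). Then at every point x = (x₁,x₂,x₃) with x₁ ≠ 0 and x₂ ≠ 0, the map φ is differentiable, its Jacobian determinant equals 1, ‖Dφ(x)‖ = √(2+√3) and ℓ(Dφ(x)) = √(2−√3); in particular the ratio ‖Dφ(x)‖/ℓ(Dφ(x)) is the same constant at all such points. -/

import Mathlib

/-- The quasiconformal shear map `φ(x₁,x₂,x₃) = (x₁, x₂, x₃ − |x₁| − |x₂|)`. -/
noncomputable def phiMap (x : EuclideanSpace ℝ (Fin 3)) : EuclideanSpace ℝ (Fin 3) :=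
  (WithLp.equiv 2 (Fin 3 → ℝ)).symm ![x 0, x 1, x 2 - |x 0| - |x 1|]

/-- `ℓ(L) = inf_{|h|=1} |L h|`, the minimal stretching of a linear map `L : ℝ³ → ℝ³`. -/
noncomputable def ell (L : EuclideanSpace ℝ (Fin 3) →L[ℝ] EuclideanSpace ℝ (Fin 3)) : ℝ :=
  ⨅ h : Metric.sphere (0 : EuclideanSpace ℝ (Fin 3)) 1, ‖L (h : EuclideanSpace ℝ (Fin 3))‖

/-!
Near a point with `x₁ ≠ 0` and `x₂ ≠ 0` the signs of `x₁` and `x₂` are locally constant, so `φ`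
coincides there with the linear shear `h ↦ (h₁, h₂, h₃ − a h₁ − b h₂)`, `a, b ∈ {±1}`, which is
therefore `Dφ(x)`. Being unipotent it has determinant `1`. Its Gram matrix has eigenvalues
`1` and `2 ± √3`, the latter two on the vectors `(t a, t b, 1)` with `2t² + 2t = 1`; so
`‖Dφ(x)‖² = 2 + √3` and `ℓ(Dφ(x))² = 2 − √3`.
-/

open Filter Topology

namespace Real

lemma le_sqrt_mul_of_sq_le {a b c : ℝ} (hb : 0 ≤ b) (h : a ^ 2 ≤ c * b ^ 2) : a ≤ √c * b :=
  calc a ≤ |a| := le_abs_self a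
    _ ≤ √(c * b ^ 2) := abs_le_sqrt h
    _ = √c * b := by rw [sqrt_mul' _ (sq_nonneg b), sqrt_sq hb]

lemma sqrt_mul_le_of_le_sq {a b c : ℝ} (ha : 0 ≤ a) (h : c * b ^ 2 ≤ a ^ 2) : √c * b ≤ a :=
  calc √c * b ≤ √c * |b| := mul_le_mul_of_nonneg_left (le_abs_self b) (sqrt_nonneg c)
    _ = √(c * b ^ 2) := by rw [sqrt_mul' _ (sq_nonneg b), sqrt_sq_eq_abs]
    _ ≤ √(a ^ 2) := sqrt_le_sqrt h
    _ = a := sqrt_sq ha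

lemma eq_sqrt_mul_of_sq_eq {a b c : ℝ} (ha : 0 ≤ a) (hb : 0 ≤ b) (h : a ^ 2 = c * b ^ 2) :
    a = √c * b :=
  le_antisymm (le_sqrt_mul_of_sq_le hb h.le) (sqrt_mul_le_of_le_sq ha h.ge)

end Real

lemma ContinuousLinearMap.opNorm_eq_sqrt_of_sq_bounds {E F : Type*} [NormedAddCommGroup E]
    [NormedSpace ℝ E] [NormedAddCommGroup F] [NormedSpace ℝ F] (L : E →L[ℝ] F) {c : ℝ}
    (hle : ∀ h, ‖L h‖ ^ 2 ≤ c * ‖h‖ ^ 2) {v : E} (hv : v ≠ 0)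
    (hLv : ‖L v‖ ^ 2 = c * ‖v‖ ^ 2) : ‖L‖ = √c := by
  refine le_antisymm (L.opNorm_le_bound (Real.sqrt_nonneg c) fun h =>
    Real.le_sqrt_mul_of_sq_le (norm_nonneg h) (hle h)) ?_
  have hattained : √c * ‖v‖ ≤ ‖L‖ * ‖v‖ :=
    (Real.eq_sqrt_mul_of_sq_eq (norm_nonneg _) (norm_nonneg v) hLv) ▸ L.le_opNorm v
  exact le_of_mul_le_mul_right hattained (norm_pos_iff.mpr hv)

lemma ell_eq_sqrt_of_sq_bounds (L : EuclideanSpace ℝ (Fin 3) →L[ℝ] EuclideanSpace ℝ (Fin 3))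
    {c : ℝ} (hle : ∀ h, c * ‖h‖ ^ 2 ≤ ‖L h‖ ^ 2) {v : EuclideanSpace ℝ (Fin 3)} (hv : v ≠ 0)
    (hLv : ‖L v‖ ^ 2 = c * ‖v‖ ^ 2) : ell L = √c := by
  have hvpos : 0 < ‖v‖ := norm_pos_iff.mpr hv
  set w := ‖v‖⁻¹ • v
  have hw : w ∈ Metric.sphere (0 : EuclideanSpace ℝ (Fin 3)) 1 := by
    rw [mem_sphere_zero_iff_norm, norm_smul, norm_inv, norm_norm, inv_mul_cancel₀ hvpos.ne']
  have hLw : ‖L w‖ = √c := by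
    rw [map_smul, norm_smul, norm_inv, norm_norm,
      Real.eq_sqrt_mul_of_sq_eq (norm_nonneg _) (norm_nonneg v) hLv]
    field_simp
  have : Nonempty (Metric.sphere (0 : EuclideanSpace ℝ (Fin 3)) 1) := ⟨⟨w, hw⟩⟩
  have hbdd : BddBelow (Set.range fun h : Metric.sphere (0 : EuclideanSpace ℝ (Fin 3)) 1 =>
      ‖L h‖) := ⟨0, by rintro _ ⟨h, rfl⟩; exact norm_nonneg _⟩
  refine le_antisymm ?_ (le_ciInf fun h => ?_)
  · rw [← hLw]
    exact ciInf_le hbdd ⟨w, hw⟩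
  · have hunit : ‖(h : EuclideanSpace ℝ (Fin 3))‖ = 1 := mem_sphere_zero_iff_norm.mp h.2
    have := Real.sqrt_mul_le_of_le_sq (norm_nonneg _) (hle h)
    rwa [hunit, mul_one] at this

lemma exists_sq_eq_one_eventually_abs_eq_mul {c : ℝ} (hc : c ≠ 0) :
    ∃ a : ℝ, a ^ 2 = 1 ∧ ∀ᶠ y in 𝓝 c, |y| = a * y := by
  rcases hc.lt_or_gt with hneg | hpos
  · exact ⟨-1, by norm_num, (eventually_lt_nhds hneg).mono fun y hy => by
      rw [abs_of_neg hy]; ring⟩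
  · exact ⟨1, by norm_num, (eventually_gt_nhds hpos).mono fun y hy => by
      rw [abs_of_pos hy]; ring⟩

lemma quadratic_le_two_add_sqrt_three_mul (y₀ y₁ y₂ : ℝ) :
    y₀ ^ 2 + y₁ ^ 2 + (y₂ - y₀ - y₁) ^ 2 ≤ (2 + √3) * (y₀ ^ 2 + y₁ ^ 2 + y₂ ^ 2) := by
  have hs : √3 ^ 2 = 3 := Real.sq_sqrt (by norm_num)
  have hs1 : 1 ≤ √3 := by nlinarith [Real.sqrt_nonneg 3]
  nlinarith [mul_nonneg (sub_nonneg.mpr hs1) (sq_nonneg (y₀ + y₁ + (√3 + 1) * y₂)),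
    mul_nonneg (by linarith : (0 : ℝ) ≤ √3 + 1) (sq_nonneg (y₀ - y₁)),
    mul_nonneg (sub_nonneg.mpr hs1) (sq_nonneg y₂), sq_nonneg (y₀ - y₁), sq_nonneg y₂]

lemma two_sub_sqrt_three_mul_le_quadratic (y₀ y₁ y₂ : ℝ) :
    (2 - √3) * (y₀ ^ 2 + y₁ ^ 2 + y₂ ^ 2) ≤ y₀ ^ 2 + y₁ ^ 2 + (y₂ - y₀ - y₁) ^ 2 := by
  have hs : √3 ^ 2 = 3 := Real.sq_sqrt (by norm_num)
  have hs1 : 1 ≤ √3 := by nlinarith [Real.sqrt_nonneg 3]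
  nlinarith [mul_nonneg (by linarith : (0 : ℝ) ≤ √3 + 1) (sq_nonneg (y₀ + y₁ - (√3 - 1) * y₂)),
    mul_nonneg (sub_nonneg.mpr hs1) (sq_nonneg (y₀ - y₁)),
    mul_nonneg (sub_nonneg.mpr hs1) (sq_nonneg y₂), sq_nonneg (y₀ - y₁), sq_nonneg y₂]

lemma EuclideanSpace.norm_sq_fin_three (h : EuclideanSpace ℝ (Fin 3)) :
    ‖h‖ ^ 2 = h 0 ^ 2 + h 1 ^ 2 + h 2 ^ 2 := by
  rw [EuclideanSpace.real_norm_sq_eq, Fin.sum_univ_three]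

noncomputable def shear (a b : ℝ) : EuclideanSpace ℝ (Fin 3) →L[ℝ] EuclideanSpace ℝ (Fin 3) :=
  LinearMap.toContinuousLinearMap
  { toFun := fun h => (WithLp.equiv 2 (Fin 3 → ℝ)).symm ![h 0, h 1, h 2 - a * h 0 - b * h 1]
    map_add' := fun u v => by ext i; fin_cases i <;> simp; ring
    map_smul' := fun c u => by ext i; fin_cases i <;> simp; ring }

namespace shear

variable (a b : ℝ)

lemma apply (h : EuclideanSpace ℝ (Fin 3)) :
    shear a b h = (WithLp.equiv 2 (Fin 3 → ℝ)).symm ![h 0, h 1, h 2 - a * h 0 - b * h 1] := rfl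

lemma norm_apply_sq (h : EuclideanSpace ℝ (Fin 3)) :
    ‖shear a b h‖ ^ 2 = h 0 ^ 2 + h 1 ^ 2 + (h 2 - a * h 0 - b * h 1) ^ 2 := by
  rw [EuclideanSpace.norm_sq_fin_three]
  rfl

lemma det_eq_one : (shear a b).det = 1 := by
  rw [ContinuousLinearMap.det,
    ← LinearMap.det_toMatrix (EuclideanSpace.basisFun (Fin 3) ℝ).toBasis, Matrix.det_fin_three]
  simp [LinearMap.toMatrix_apply, shear, EuclideanSpace.basisFun_apply]

variable {a b}

lemma norm_apply_sq_le (ha : a ^ 2 = 1) (hb : b ^ 2 = 1) (h : EuclideanSpace ℝ (Fin 3)) :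
    ‖shear a b h‖ ^ 2 ≤ (2 + √3) * ‖h‖ ^ 2 := by
  have key := quadratic_le_two_add_sqrt_three_mul (a * h 0) (b * h 1) (h 2)
  rw [mul_pow, mul_pow, ha, hb, one_mul, one_mul] at key
  rwa [norm_apply_sq, EuclideanSpace.norm_sq_fin_three]

lemma le_norm_apply_sq (ha : a ^ 2 = 1) (hb : b ^ 2 = 1) (h : EuclideanSpace ℝ (Fin 3)) :
    (2 - √3) * ‖h‖ ^ 2 ≤ ‖shear a b h‖ ^ 2 := by
  have key := two_sub_sqrt_three_mul_le_quadratic (a * h 0) (b * h 1) (h 2)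
  rw [mul_pow, mul_pow, ha, hb, one_mul, one_mul] at key
  rwa [norm_apply_sq, EuclideanSpace.norm_sq_fin_three]

lemma norm_apply_eigenvector_sq (ha : a ^ 2 = 1) (hb : b ^ 2 = 1) {t : ℝ}
    (ht : 2 * t ^ 2 + 2 * t = 1) :
    ‖shear a b ((WithLp.equiv 2 (Fin 3 → ℝ)).symm ![t * a, t * b, 1])‖ ^ 2 =
      (1 - 2 * t) * ‖(WithLp.equiv 2 (Fin 3 → ℝ)).symm ![t * a, t * b, 1]‖ ^ 2 := by
  rw [norm_apply_sq, EuclideanSpace.norm_sq_fin_three]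
  have hat : a * (t * a) = t := by linear_combination t * ha
  have hbt : b * (t * b) = t := by linear_combination t * hb
  simp only [WithLp.equiv_symm_apply, PiLp.toLp_apply, Matrix.cons_val]
  rw [hat, hbt, mul_pow, mul_pow, ha, hb]
  linear_combination 2 * t * ht

lemma eigenvector_ne_zero (s₀ s₁ : ℝ) : (WithLp.equiv 2 (Fin 3 → ℝ)).symm ![s₀, s₁, 1] ≠ 0 :=
  fun h => one_ne_zero (congrArg (· 2) h)

lemma opNorm_eq (ha : a ^ 2 = 1) (hb : b ^ 2 = 1) : ‖shear a b‖ = √(2 + √3) := by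
  set t : ℝ := -(1 + √3) / 2
  have ht : 2 * t ^ 2 + 2 * t = 1 := by
    linear_combination (1 / 2 : ℝ) * Real.sq_sqrt (show (0 : ℝ) ≤ 3 by norm_num)
  have hLv := norm_apply_eigenvector_sq ha hb ht
  rw [show 1 - 2 * t = 2 + √3 by ring] at hLv
  exact (shear a b).opNorm_eq_sqrt_of_sq_bounds (norm_apply_sq_le ha hb)
    (eigenvector_ne_zero _ _) hLv

lemma ell_eq (ha : a ^ 2 = 1) (hb : b ^ 2 = 1) : ell (shear a b) = √(2 - √3) := by
  set t : ℝ := (√3 - 1) / 2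
  have ht : 2 * t ^ 2 + 2 * t = 1 := by
    linear_combination (1 / 2 : ℝ) * Real.sq_sqrt (show (0 : ℝ) ≤ 3 by norm_num)
  have hLv := norm_apply_eigenvector_sq ha hb ht
  rw [show 1 - 2 * t = 2 - √3 by ring] at hLv
  exact ell_eq_sqrt_of_sq_bounds (shear a b) (le_norm_apply_sq ha hb)
    (eigenvector_ne_zero _ _) hLv

end shear

lemma phiMap_eventuallyEq_shear {x : EuclideanSpace ℝ (Fin 3)} {a b : ℝ}
    (ha : ∀ᶠ y in 𝓝 (x 0), |y| = a * y) (hb : ∀ᶠ y in 𝓝 (x 1), |y| = b * y) :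
    phiMap =ᶠ[𝓝 x] shear a b := by
  filter_upwards [(PiLp.continuous_apply 2 _ 0).continuousAt.eventually ha,
    (PiLp.continuous_apply 2 _ 1).continuousAt.eventually hb] with y hy₀ hy₁
  rw [phiMap, shear.apply, hy₀, hy₁]

/-- At every point with `x₁ ≠ 0` and `x₂ ≠ 0` the map `φ` is differentiable, its
Jacobian determinant equals `1`, `‖Dφ(x)‖ = √(2+√3)` and `ℓ(Dφ(x)) = √(2−√3)`;
in particular `‖Dφ(x)‖/ℓ(Dφ(x))` is the same constant at all such points. -/
theorem phiMap_derivative (x : EuclideanSpace ℝ (Fin 3)) (h1 : x 0 ≠ 0) (h2 : x 1 ≠ 0) :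
    DifferentiableAt ℝ phiMap x ∧
      (fderiv ℝ phiMap x).det = 1 ∧
      ‖fderiv ℝ phiMap x‖ = Real.sqrt (2 + Real.sqrt 3) ∧
      ell (fderiv ℝ phiMap x) = Real.sqrt (2 - Real.sqrt 3) := by
  obtain ⟨a, ha, hxa⟩ := exists_sq_eq_one_eventually_abs_eq_mul h1
  obtain ⟨b, hb, hxb⟩ := exists_sq_eq_one_eventually_abs_eq_mul h2
  have hderiv : HasFDerivAt phiMap (shear a b) x :=
    (shear a b).hasFDerivAt.congr_of_eventuallyEq (phiMap_eventuallyEq_shear hxa hxb)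
  rw [hderiv.fderiv]
  exact ⟨hderiv.differentiableAt, shear.det_eq_one a b, shear.opNorm_eq ha hb, shear.ell_eq ha hb⟩
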